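/- arXiv:2205.13756 — 5 statements merged into one kernel-verified Lean document; each statement's English description precedes it below -/
import Mathlib

section
/- For all y₁ > 0, y₂ ≥ 0, and κ ∈ (0, 1], one has κ·log₂(1 + y₁/(κ + y₂)) ≤ log₂(1 + y₁/(1 + y₂)), with equality when κ = 1. -/
/-! Bernoulli's inequality `(1 + x) ^ κ ≤ 1 + κ x` gives `κ log(1 + x) ≤ log(1 + κ x)`, and
`κ / (κ + y₂) ≤ 1 / (1 + y₂)` because `κ y₂ ≤ y₂`; monotonicity of `log` finishes. -/

open Real

theorem mul_logb_one_add_le_logb_one_add_mul {b x κ : ℝ} (hb : 1 < b) (hx : -1 < x)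
    (hκ0 : 0 ≤ κ) (hκ1 : κ ≤ 1) : κ * logb b (1 + x) ≤ logb b (1 + κ * x) := by
  have hpos : 0 < 1 + x := by linarith
  rw [← logb_rpow_eq_mul_logb_of_pos hpos]
  exact logb_le_logb_of_le hb (rpow_pos_of_pos hpos κ)
    (rpow_one_add_le_one_add_mul_self hx.le hκ0 hκ1)

theorem mul_div_add_le_div_one_add {y₁ y₂ κ : ℝ} (hy₁ : 0 ≤ y₁) (hy₂ : 0 ≤ y₂) (hκ0 : 0 < κ)
    (hκ1 : κ ≤ 1) : κ * (y₁ / (κ + y₂)) ≤ y₁ / (1 + y₂) := by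
  rw [mul_div_assoc', div_le_div_iff₀ (by linarith) (by linarith)]
  nlinarith [mul_nonneg (mul_nonneg hy₁ hy₂) (sub_nonneg.mpr hκ1)]

theorem bandwidth_split_rate_le (y₁ y₂ κ : ℝ) (hy₁ : 0 < y₁) (hy₂ : 0 ≤ y₂)
    (hκ : κ ∈ Set.Ioc (0 : ℝ) 1) :
    κ * Real.logb 2 (1 + y₁ / (κ + y₂)) ≤ Real.logb 2 (1 + y₁ / (1 + y₂)) ∧
      (κ = 1 → κ * Real.logb 2 (1 + y₁ / (κ + y₂)) = Real.logb 2 (1 + y₁ / (1 + y₂))) := by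
  obtain ⟨hκ0, hκ1⟩ := hκ
  have hx : 0 ≤ y₁ / (κ + y₂) := by positivity
  refine ⟨?_, by rintro rfl; rw [one_mul]⟩
  calc κ * logb 2 (1 + y₁ / (κ + y₂))
      ≤ logb 2 (1 + κ * (y₁ / (κ + y₂))) :=
        mul_logb_one_add_le_logb_one_add_mul one_lt_two (by linarith) hκ0.le hκ1
    _ ≤ logb 2 (1 + y₁ / (1 + y₂)) :=
        logb_le_logb_of_le one_lt_two (by positivity)
          (by gcongr; exact mul_div_add_le_div_one_add hy₁.le hy₂ hκ0 hκ1)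
end

section
/- For all y₁ > 0, y₂ ≥ 0, κ ∈ (0, 1], and μ ∈ (0, 1], one has κ·log₂(1 + y₁/(κ + y₂)) ≤ log₂(1 + (y₁/μ)/(1 + y₂/μ)), with equality when κ = μ = 1. -/
/-! Since `(y₁ / μ) / (1 + y₂ / μ) = y₁ / (μ + y₂)`, the claim follows from two facts:
concavity of `logb` in the form of Bernoulli's inequality, `κ · logb (1 + t) ≤ logb (1 + κ t)`
for `κ ∈ [0, 1]`, and the SINR comparison `κ · y₁ / (κ + y₂) ≤ y₁ / (μ + y₂)`. -/

namespace Real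

theorem mul_logb_one_add_le_logb_one_add_mul {b κ t : ℝ} (hb : 1 < b) (ht : -1 < t)
    (hκ₀ : 0 ≤ κ) (hκ₁ : κ ≤ 1) :
    κ * logb b (1 + t) ≤ logb b (1 + κ * t) := by
  have hpos : 0 < 1 + t := by linarith
  calc κ * logb b (1 + t) = logb b ((1 + t) ^ κ) := (logb_rpow_eq_mul_logb_of_pos hpos).symm
    _ ≤ logb b (1 + κ * t) :=
      logb_le_logb_of_le hb (rpow_pos_of_pos hpos κ)
        (rpow_one_add_le_one_add_mul_self ht.le hκ₀ hκ₁)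

end Real

theorem div_div_one_add_div {K : Type*} [Field K] (a b : K) {c : K} (hc : c ≠ 0) :
    a / c / (1 + b / c) = a / (c + b) := by
  rw [div_div, mul_add, mul_one, mul_div_cancel₀ b hc]

theorem mul_div_add_le_div_add {y z κ μ : ℝ} (hy : 0 ≤ y) (hz : 0 ≤ z)
    (hκ₀ : 0 < κ) (hκ₁ : κ ≤ 1) (hμ₀ : 0 < μ) (hμ₁ : μ ≤ 1) :
    κ * (y / (κ + z)) ≤ y / (μ + z) := by
  rw [mul_div_assoc', div_le_div_iff₀ (by linarith) (by linarith)]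
  nlinarith [mul_nonneg (sub_nonneg.2 hκ₁) (mul_nonneg hy hz),
    mul_nonneg (mul_nonneg hκ₀.le (sub_nonneg.2 hμ₁)) hy]

theorem fdsac_rate_le_isac_rate (y₁ y₂ κ μ : ℝ) (hy₁ : 0 < y₁) (hy₂ : 0 ≤ y₂)
    (hκ : κ ∈ Set.Ioc (0 : ℝ) 1) (hμ : μ ∈ Set.Ioc (0 : ℝ) 1) :
    κ * Real.logb 2 (1 + y₁ / (κ + y₂)) ≤ Real.logb 2 (1 + (y₁ / μ) / (1 + y₂ / μ)) ∧
      (κ = 1 → μ = 1 →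
        κ * Real.logb 2 (1 + y₁ / (κ + y₂)) = Real.logb 2 (1 + (y₁ / μ) / (1 + y₂ / μ))) := by
  obtain ⟨hκ₀, hκ₁⟩ := hκ
  obtain ⟨hμ₀, hμ₁⟩ := hμ
  rw [div_div_one_add_div y₁ y₂ hμ₀.ne']
  refine ⟨?_, by rintro rfl rfl; rw [one_mul]⟩
  have hsinr : 0 ≤ y₁ / (κ + y₂) := by positivity
  calc κ * Real.logb 2 (1 + y₁ / (κ + y₂))
      ≤ Real.logb 2 (1 + κ * (y₁ / (κ + y₂))) :=
        Real.mul_logb_one_add_le_logb_one_add_mul one_lt_two (by linarith) hκ₀.le hκ₁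
    _ ≤ Real.logb 2 (1 + y₁ / (μ + y₂)) :=
        Real.logb_le_logb_of_le one_lt_two (by positivity) <| add_le_add_right
          (mul_div_add_le_div_add hy₁.le hy₂ hκ₀ hκ₁ hμ₀ hμ₁) 1
end

section
/- Let X be exponential with rate λ > 0. Then E[ln(1 + pX)] = −e^{λ/p}·Ei(−λ/p) for any p > 0, where Ei is the exponential integral. -/
open MeasureTheory ProbabilityTheory

/-- The exponential integral `Ei x = -∫_{-x}^∞ e^{-t}/t dt`. -/
noncomputable def Ei (x : ℝ) : ℝ := -∫ t in Set.Ioi (-x), Real.exp (-t) / t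

/-!
By the tail (layer cake) formula, `E[G(X)] = ∫₀^∞ G'(t) P(X > t) dt` for `G(0) = 0` and `G' ≥ 0`.
For `X ~ Exp(λ)` and `G(x) = ln(1 + px)` this is `∫₀^∞ e^{-λt} / (t + 1/p) dt`, and the
substitution `s = λ(t + 1/p)` turns it into `e^{λ/p} ∫_{λ/p}^∞ e^{-s}/s ds = -e^{λ/p} Ei(-λ/p)`.
-/

open Real Set

namespace ProbabilityTheory

lemma expMeasure_Iio_zero (r : ℝ) : expMeasure r (Iio 0) = 0 := by
  rw [expMeasure, gammaMeasure, withDensity_apply _ measurableSet_Iio]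
  exact lintegral_gammaPDF_of_nonpos le_rfl

lemma ae_nonneg_expMeasure (r : ℝ) : ∀ᵐ x ∂expMeasure r, 0 ≤ x := by
  simpa [ae_iff, not_le, ← Iio_def] using expMeasure_Iio_zero r

lemma expMeasure_Ioi {r : ℝ} (hr : 0 < r) {t : ℝ} (ht : 0 ≤ t) :
    expMeasure r (Ioi t) = ENNReal.ofReal (exp (-(r * t))) := by
  have := isProbabilityMeasure_expMeasure hr
  have hexp : exp (-(r * t)) ≤ 1 := exp_le_one_iff.2 (neg_nonpos.2 (mul_nonneg hr.le ht))
  rw [← compl_Iic, prob_compl_eq_one_sub measurableSet_Iic, ← ofReal_cdf, cdf_expMeasure_eq hr,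
    if_pos ht, ← ENNReal.ofReal_one, ← ENNReal.ofReal_sub _ (sub_nonneg.2 hexp), sub_sub_cancel]

lemma lintegral_expMeasure_eq_lintegral_exp_mul {r : ℝ} (hr : 0 < r) {g : ℝ → ℝ}
    (g_intble : ∀ t > 0, IntervalIntegrable g volume 0 t) (g_nn : ∀ t > 0, 0 ≤ g t) :
    ∫⁻ x, ENNReal.ofReal (∫ t in 0..x, g t) ∂expMeasure r =
      ∫⁻ t in Ioi 0, ENNReal.ofReal (exp (-(r * t)) * g t) := by
  rw [lintegral_comp_eq_lintegral_meas_lt_mul _ (ae_nonneg_expMeasure r) aemeasurable_id g_intble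
    (ae_restrict_of_forall_mem measurableSet_Ioi g_nn)]
  refine setLIntegral_congr_fun measurableSet_Ioi fun t ht => ?_
  rw [Ioi_def, expMeasure_Ioi hr (le_of_lt ht), ENNReal.ofReal_mul (exp_pos _).le]

lemma integral_expMeasure_eq_integral_exp_mul {r : ℝ} (hr : 0 < r) {G g : ℝ → ℝ}
    (hG : AEStronglyMeasurable G (expMeasure r))
    (hg : AEStronglyMeasurable g (volume.restrict (Ioi 0)))
    (hGg : ∀ x, 0 ≤ x → G x = ∫ t in 0..x, g t)
    (g_intble : ∀ t > 0, IntervalIntegrable g volume 0 t) (g_nn : ∀ t > 0, 0 ≤ g t) :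
    ∫ x, G x ∂expMeasure r = ∫ t in Ioi 0, exp (-(r * t)) * g t := by
  have hG_ae : G =ᵐ[expMeasure r] fun x => ∫ t in 0..x, g t := by
    filter_upwards [ae_nonneg_expMeasure r] with x hx using hGg x hx
  have hG_nn : 0 ≤ᵐ[expMeasure r] G := by
    filter_upwards [ae_nonneg_expMeasure r] with x hx
    rw [hGg x hx, intervalIntegral.integral_of_le hx]
    exact setIntegral_nonneg measurableSet_Ioc fun t ht => g_nn t ht.1
  have hexp_g_nn : ∀ t ∈ Ioi (0 : ℝ), 0 ≤ exp (-(r * t)) * g t :=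
    fun t ht => mul_nonneg (exp_pos _).le (g_nn t ht)
  rw [integral_eq_lintegral_of_nonneg_ae hG_nn hG,
    integral_eq_lintegral_of_nonneg_ae (ae_restrict_of_forall_mem measurableSet_Ioi hexp_g_nn)
      ((by fun_prop : Continuous fun t => exp (-(r * t))).aestronglyMeasurable.mul hg),
    ← lintegral_expMeasure_eq_lintegral_exp_mul hr g_intble g_nn]
  exact congrArg ENNReal.toReal
    (lintegral_congr_ae (hG_ae.mono fun x hx => congrArg ENNReal.ofReal hx))

end ProbabilityTheory

lemma integral_div_one_add_mul {p x : ℝ} (hp : 0 ≤ p) (hx : 0 ≤ x) :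
    ∫ t in 0..x, p / (1 + p * t) = log (1 + p * x) := by
  have hpos : ∀ t ∈ uIcc 0 x, 0 < 1 + p * t := fun t ht => by
    rw [uIcc_of_le hx] at ht
    nlinarith [ht.1]
  have hderiv : ∀ t ∈ uIcc 0 x, HasDerivAt (fun t => log (1 + p * t)) (p / (1 + p * t)) t :=
    fun t ht => by simpa using (((hasDerivAt_id t).const_mul p).const_add 1).log (hpos t ht).ne'
  rw [intervalIntegral.integral_eq_sub_of_hasDerivAt hderiv (ContinuousOn.intervalIntegrable
    (continuousOn_const.div (by fun_prop) fun t ht => (hpos t ht).ne'))]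
  simp

theorem integral_comp_add_right_Ioi {E : Type*} [NormedAddCommGroup E] [NormedSpace ℝ E]
    (g : ℝ → E) (a b : ℝ) : ∫ x in Ioi a, g (x + b) = ∫ x in Ioi (a + b), g x := by
  simpa using (measurePreserving_add_right volume b).setIntegral_preimage_emb
    (measurableEmbedding_addRight b) g (Ioi (a + b))

theorem integral_Ioi_exp_neg_mul_div_add {c : ℝ} (hc : 0 < c) (b : ℝ) :
    ∫ x in Ioi 0, exp (-(c * x)) / (x + b) = -(exp (c * b) * Ei (-(c * b))) := by
  have hrw : ∀ x, exp (-(c * x)) / (x + b) =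
      c * exp (c * b) * (exp (-(c * (x + b))) / (c * (x + b))) := fun x => by
    rw [mul_add, neg_add, exp_add, exp_neg (c * b)]
    field_simp
  simp_rw [hrw]
  rw [integral_const_mul, integral_comp_add_right_Ioi (fun y => exp (-(c * y)) / (c * y)),
    integral_comp_mul_left_Ioi (fun t => exp (-t) / t) _ hc, Ei, neg_neg, zero_add, smul_eq_mul]
  field_simp

theorem ergodic_rate_exponential (lam p : ℝ) (hlam : 0 < lam) (hp : 0 < p) :
    ∫ x, Real.log (1 + p * x) ∂(expMeasure lam) =
      -(Real.exp (lam / p) * Ei (-(lam / p))) := by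
  have hg : ContinuousOn (fun t => p / (1 + p * t)) (Ici 0) :=
    continuousOn_const.div (by fun_prop) fun t (ht : 0 ≤ t) => by positivity
  have hg_intble : ∀ t > 0, IntervalIntegrable (fun t => p / (1 + p * t)) volume 0 t :=
    fun t ht => (hg.mono (by simp [uIcc_of_le ht.le, Icc_subset_Ici_self])).intervalIntegrable
  rw [integral_expMeasure_eq_integral_exp_mul hlam
    (by fun_prop : Measurable fun x => log (1 + p * x)).aestronglyMeasurable
    (by fun_prop : Measurable fun t => p / (1 + p * t)).aestronglyMeasurable
    (fun x hx => (integral_div_one_add_mul hp.le hx).symm) hg_intble (fun t _ => by positivity)]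
  have hrw : ∀ t, exp (-(lam * t)) * (p / (1 + p * t)) = exp (-(lam * t)) / (t + p⁻¹) :=
    fun t => by field_simp; ring
  simp_rw [hrw]
  rw [integral_Ioi_exp_neg_mul_div_add hlam, div_eq_mul_inv]
end

section
/- Let R be an M×M Hermitian PSD matrix with positive eigenvalues λ₁,…,λ_r, and let p, L, σ² > 0, κ ∈ [0, 1), μ ∈ [0, 1]. Then ((1−κ)/L)·log₂ det(I + ((1−μ)pL/((1−κ)σ²))·R) ≤ (1/L)·log₂ det(I + (pL/σ²)·R), with equality when κ = μ = 0. -/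
/-!
Diagonalising `R`, both log-determinants become sums over the eigenvalues `λ ≥ 0` of `R`, and the
inequality holds termwise: with `t = 1 - κ ∈ (0, 1]` and `x ≥ 0`, Bernoulli's inequality
`(1 + x / t) ^ t ≤ 1 + x` gives `t * log (1 + x / t) ≤ log (1 + x)`, while the factor `1 - μ ≤ 1`
only shrinks the left-hand side.
-/
open Matrix
open scoped ComplexOrder

theorem Matrix.IsHermitian.det_one_add_smul {𝕜 n : Type*} [RCLike 𝕜] [Fintype n] [DecidableEq n]
    {A : Matrix n n 𝕜} (hA : A.IsHermitian) (c : ℝ) :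
    det (1 + (c : 𝕜) • A) = ∏ i, ((1 + c * hA.eigenvalues i : ℝ) : 𝕜) := by
  conv_lhs => rw [hA.spectral_theorem, ← map_smul,
    ← map_one (Unitary.conjStarAlgAut 𝕜 _ hA.eigenvectorUnitary), ← map_add]
  rw [Unitary.conjStarAlgAut_apply, det_mul_right_comm,
    Unitary.mul_star_self_of_mem hA.eigenvectorUnitary.2, one_mul]
  simp [← diagonal_one, ← diagonal_smul, diagonal_add, det_diagonal]

theorem Real.mul_log_one_add_div_le {t x : ℝ} (ht₀ : 0 < t) (ht₁ : t ≤ 1) (hx : 0 ≤ x) :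
    t * log (1 + x / t) ≤ log (1 + x) := by
  have hxt : 0 ≤ x / t := by positivity
  calc t * log (1 + x / t) = log ((1 + x / t) ^ t) := (log_rpow (by positivity) t).symm
    _ ≤ log (1 + t * (x / t)) :=
        log_le_log (by positivity) (rpow_one_add_le_one_add_mul_self (by linarith) ht₀.le ht₁)
    _ = log (1 + x) := by rw [mul_div_cancel₀ x ht₀.ne']

theorem Matrix.PosSemidef.log_re_det_one_add_smul {𝕜 n : Type*} [RCLike 𝕜] [Fintype n]
    [DecidableEq n] {A : Matrix n n 𝕜} (hA : A.PosSemidef) {c : ℝ} (hc : 0 ≤ c) :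
    Real.log (RCLike.re (det (1 + (c : 𝕜) • A))) = ∑ i, Real.log (1 + c * hA.1.eigenvalues i) := by
  rw [hA.1.det_one_add_smul, ← RCLike.ofReal_prod, RCLike.ofReal_re,
    Real.log_prod fun i _ => by have := hA.eigenvalues_nonneg i; positivity]

theorem Matrix.PosSemidef.mul_logb_re_det_one_add_div_smul_le {𝕜 n : Type*} [RCLike 𝕜]
    [Fintype n] [DecidableEq n] {A : Matrix n n 𝕜} (hA : A.PosSemidef) {b a c t : ℝ}
    (hb : 1 ≤ b) (ha : 0 ≤ a) (hac : a ≤ c) (ht₀ : 0 < t) (ht₁ : t ≤ 1) :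
    t * Real.logb b (RCLike.re (det (1 + ((a / t : ℝ) : 𝕜) • A))) ≤
      Real.logb b (RCLike.re (det (1 + (c : 𝕜) • A))) := by
  rw [Real.logb, Real.logb, ← mul_div_assoc]
  refine div_le_div_of_nonneg_right ?_ (Real.log_nonneg hb)
  rw [hA.log_re_det_one_add_smul (by positivity), hA.log_re_det_one_add_smul (ha.trans hac),
    Finset.mul_sum]
  refine Finset.sum_le_sum fun i _ => ?_
  have hev := hA.eigenvalues_nonneg i
  calc t * Real.log (1 + a / t * hA.1.eigenvalues i)
      = t * Real.log (1 + a * hA.1.eigenvalues i / t) := by rw [div_mul_eq_mul_div]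
    _ ≤ Real.log (1 + a * hA.1.eigenvalues i) :=
        Real.mul_log_one_add_div_le ht₀ ht₁ (by positivity)
    _ ≤ Real.log (1 + c * hA.1.eigenvalues i) := by gcongr

theorem fdsac_sensing_rate_le_isac_general (M : ℕ)
    (R : Matrix (Fin M) (Fin M) ℂ) (hR : R.PosSemidef)
    (p L σ2 κ μ : ℝ) (hp : 0 < p) (hL : 0 < L) (hσ : 0 < σ2)
    (hκ : κ ∈ Set.Ico (0 : ℝ) 1) (hμ : μ ∈ Set.Icc (0 : ℝ) 1) :
    ((1 - κ) / L) * Real.logb 2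
        ((1 + (((1 - μ) * p * L / ((1 - κ) * σ2) : ℝ) : ℂ) • R).det).re ≤
      (1 / L) * Real.logb 2 ((1 + ((p * L / σ2 : ℝ) : ℂ) • R).det).re ∧
    (κ = 0 → μ = 0 →
      ((1 - κ) / L) * Real.logb 2
          ((1 + (((1 - μ) * p * L / ((1 - κ) * σ2) : ℝ) : ℂ) • R).det).re =
        (1 / L) * Real.logb 2 ((1 + ((p * L / σ2 : ℝ) : ℂ) • R).det).re) := by
  obtain ⟨hκ₀, hκ₁⟩ := hκ
  obtain ⟨hμ₀, hμ₁⟩ := hμ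
  refine ⟨?_, fun hκ hμ => by subst hκ hμ; norm_num⟩
  have hcoeff : (1 - μ) * p * L / ((1 - κ) * σ2) = (1 - μ) * p * L / σ2 / (1 - κ) := by
    rw [div_div, mul_comm σ2]
  have hle : (1 - μ) * p * L / σ2 ≤ p * L / σ2 :=
    div_le_div_of_nonneg_right (by nlinarith [mul_pos hp hL]) hσ.le
  rw [hcoeff, div_mul_eq_mul_div, one_div_mul_eq_div]
  exact div_le_div_of_nonneg_right (hR.mul_logb_re_det_one_add_div_smul_le one_le_two
    (by positivity) hle (by linarith) (by linarith)) hL.le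

theorem fdsac_sensing_rate_le_isac (M r : ℕ) (hr : r ≤ M)
    (R : Matrix (Fin M) (Fin M) ℂ) (hR : R.PosSemidef)
    (p L σ2 κ μ : ℝ) (hp : 0 < p) (hL : 0 < L) (hσ : 0 < σ2)
    (hκ : κ ∈ Set.Ico (0 : ℝ) 1) (hμ : μ ∈ Set.Icc (0 : ℝ) 1)
    (hpos : ∀ i : Fin M, (i : ℕ) < r → 0 < hR.1.eigenvalues i)
    (hzero : ∀ i : Fin M, r ≤ (i : ℕ) → hR.1.eigenvalues i = 0) :
    ((1 - κ) / L) * Real.logb 2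
        ((1 + (((1 - μ) * p * L / ((1 - κ) * σ2) : ℝ) : ℂ) • R).det).re ≤
      (1 / L) * Real.logb 2 ((1 + ((p * L / σ2 : ℝ) : ℂ) • R).det).re ∧
    (κ = 0 → μ = 0 →
      ((1 - κ) / L) * Real.logb 2
          ((1 + (((1 - μ) * p * L / ((1 - κ) * σ2) : ℝ) : ℂ) • R).det).re =
        (1 / L) * Real.logb 2 ((1 + ((p * L / σ2 : ℝ) : ℂ) • R).det).re) :=
  fdsac_sensing_rate_le_isac_general M R hR p L σ2 κ μ hp hL hσ hκ hμ
end

section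
/- Let X be exponential with rate λ > 0, let a_F, a_N > 0 with a_N + a_F = 1, and p > 0, σ² > 0. Then E[log₂(1 + (pX a_F)/(σ² + pX a_N))] = (1/ln 2)·(e^{λσ²/(a_N p)}·Ei(−λσ²/(a_N p)) − e^{λσ²/p}·Ei(−λσ²/p)), and as p → ∞ this converges to −log₂ a_N. -/
/-!
Since `a_N + a_F = 1`, `1 + SINR = (1 + p X / σ²) / (1 + a_N p X / σ²)`, so the rate is a
difference of two terms `E[ln(1 + c X)] / ln 2`. Integrating by parts against the exponential
density turns `E[ln(1 + c X)]` into `e^{λ/c} ∫_{λ/c}^∞ e^{-t} / t dt = -e^{λ/c} Ei(-λ/c)`.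
For the high-SNR limit, the SINR tends to `a_F / a_N` as `p → ∞` and stays below it, so
dominated convergence gives `log₂(1 + a_F / a_N) = -log₂ a_N`.
-/

open MeasureTheory ProbabilityTheory

open Real Set Filter Topology

lemma integrableOn_exp_neg_div_Ioi {a : ℝ} (ha : 0 < a) :
    IntegrableOn (fun t => exp (-t) / t) (Ioi a) := by
  refine ((exp_neg_integrableOn_Ioi a one_pos).div_const a).mono'
    ((measurable_exp.comp measurable_neg).div measurable_id).aestronglyMeasurable ?_
  filter_upwards [ae_restrict_mem measurableSet_Ioi] with t (ht : a < t)
  rw [norm_div, norm_of_nonneg (exp_nonneg _), norm_of_nonneg (ha.trans ht).le, neg_one_mul]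
  exact div_le_div_of_nonneg_left (exp_nonneg _) ha ht.le

lemma hasDerivAt_intervalIntegral_exp_neg_div {a u : ℝ} (ha : 0 < a) (hu : 0 < u) :
    HasDerivAt (fun u => ∫ t in a..u, exp (-t) / t) (exp (-u) / u) u := by
  have hcont : ContinuousOn (fun t => exp (-t) / t) (Ioi 0) :=
    (continuous_exp.comp continuous_neg).continuousOn.div continuousOn_id fun t ht => ht.ne'
  refine intervalIntegral.integral_hasDerivAt_right ?_
    (hcont.stronglyMeasurableAtFilter isOpen_Ioi u hu) (hcont.continuousAt (Ioi_mem_nhds hu))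
  exact (hcont.mono fun t ht => lt_of_lt_of_le (lt_min ha hu) ht.1).intervalIntegrable

lemma tendsto_exp_neg_mul_mul_log_one_add {lam c : ℝ} (hlam : 0 < lam) (hc : 0 ≤ c) :
    Tendsto (fun x => exp (-(lam * x)) * log (1 + c * x)) atTop (𝓝 0) := by
  have hdom : Tendsto (fun x : ℝ => c * (x ^ (1 : ℝ) * exp (-lam * x))) atTop (𝓝 0) := by
    simpa using (tendsto_rpow_mul_exp_neg_mul_atTop_nhds_zero 1 lam hlam).const_mul c
  refine tendsto_of_tendsto_of_tendsto_of_le_of_le' tendsto_const_nhds hdom ?_ ?_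
  all_goals filter_upwards [eventually_ge_atTop 0] with x hx
  · have : 0 ≤ log (1 + c * x) := log_nonneg (by nlinarith)
    positivity
  · have : log (1 + c * x) ≤ c * x := by
      linarith [log_le_sub_one_of_pos (x := 1 + c * x) (by nlinarith)]
    rw [rpow_one, neg_mul]
    nlinarith [exp_pos (-(lam * x))]

/-- Integrating `lam * exp (-(lam * x)) * log (1 + c * x)` by parts and substituting
`t = lam * x + lam / c` in the remaining term gives this primitive. -/
noncomputable def expLogAntideriv (lam c x : ℝ) : ℝ :=
  exp (lam / c) * (∫ t in lam / c..lam * x + lam / c, exp (-t) / t) -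
    exp (-(lam * x)) * log (1 + c * x)

section ExpLogAntideriv

variable {lam c : ℝ}

lemma hasDerivAt_expLogAntideriv (hlam : 0 < lam) (hc : 0 < c) {x : ℝ} (hx : 0 ≤ x) :
    HasDerivAt (expLogAntideriv lam c) (lam * exp (-(lam * x)) * log (1 + c * x)) x := by
  have hu : 0 < lam * x + lam / c := by positivity
  have h1cx : 0 < 1 + c * x := by positivity
  have hE : HasDerivAt (fun x => ∫ t in lam / c..lam * x + lam / c, exp (-t) / t)
      (exp (-(lam * x + lam / c)) / (lam * x + lam / c) * lam) x := by
    exact (hasDerivAt_intervalIntegral_exp_neg_div (div_pos hlam hc) hu).comp x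
      ((((hasDerivAt_id x).const_mul lam).add_const (lam / c)).congr_deriv (mul_one lam))
  have hexp : HasDerivAt (fun x => exp (-(lam * x))) (-(lam * exp (-(lam * x)))) x := by
    simpa [mul_comm] using ((hasDerivAt_id x).const_mul lam).neg.exp
  have hlog : HasDerivAt (fun x => log (1 + c * x)) (c / (1 + c * x)) x := by
    simpa using (((hasDerivAt_id x).const_mul c).const_add 1).log h1cx.ne'
  refine ((hE.const_mul (exp (lam / c))).sub (hexp.mul hlog)).congr_deriv ?_
  have hprod : exp (lam / c) * exp (-(lam * x + lam / c)) = exp (-(lam * x)) := by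
    rw [← exp_add]; ring_nf
  have hfrac : lam / (lam * x + lam / c) = c / (1 + c * x) := by
    field_simp; ring
  rw [show exp (lam / c) * (exp (-(lam * x + lam / c)) / (lam * x + lam / c) * lam)
      = exp (lam / c) * exp (-(lam * x + lam / c)) * (lam / (lam * x + lam / c)) by ring,
    hprod, hfrac]
  ring

lemma expLogAntideriv_zero : expLogAntideriv lam c 0 = 0 := by
  simp [expLogAntideriv]

lemma tendsto_expLogAntideriv_atTop (hlam : 0 < lam) (hc : 0 < c) :
    Tendsto (expLogAntideriv lam c) atTop (𝓝 (-(exp (lam / c) * Ei (-(lam / c))))) := by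
  have hint := intervalIntegral_tendsto_integral_Ioi (lam / c)
    (integrableOn_exp_neg_div_Ioi (div_pos hlam hc)) (tendsto_atTop_add_const_right _ (lam / c)
      (tendsto_id.const_mul_atTop hlam : Tendsto (fun x => lam * x) atTop atTop))
  have hlim :=
    (hint.const_mul (exp (lam / c))).sub (tendsto_exp_neg_mul_mul_log_one_add hlam hc.le)
  rw [sub_zero] at hlim
  unfold Ei
  rwa [neg_neg, mul_neg, neg_neg]

lemma exp_mul_log_one_add_nonneg (hlam : 0 < lam) (hc : 0 < c) {x : ℝ} (hx : 0 < x) :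
    0 ≤ lam * exp (-(lam * x)) * log (1 + c * x) :=
  mul_nonneg (by positivity) (log_nonneg (le_add_of_nonneg_right (by positivity)))

lemma integrableOn_exp_mul_log_one_add (hlam : 0 < lam) (hc : 0 < c) :
    IntegrableOn (fun x => lam * exp (-(lam * x)) * log (1 + c * x)) (Ioi 0) :=
  integrableOn_Ioi_deriv_of_nonneg' (fun _ hx => hasDerivAt_expLogAntideriv hlam hc hx)
    (fun _ hx => exp_mul_log_one_add_nonneg hlam hc hx) (tendsto_expLogAntideriv_atTop hlam hc)

lemma integral_Ioi_exp_mul_log_one_add (hlam : 0 < lam) (hc : 0 < c) :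
    ∫ x in Ioi 0, lam * exp (-(lam * x)) * log (1 + c * x) =
      -(exp (lam / c) * Ei (-(lam / c))) := by
  rw [integral_Ioi_of_hasDerivAt_of_nonneg' (fun _ hx => hasDerivAt_expLogAntideriv hlam hc hx)
    (fun _ hx => exp_mul_log_one_add_nonneg hlam hc hx) (tendsto_expLogAntideriv_atTop hlam hc),
    expLogAntideriv_zero, sub_zero]

end ExpLogAntideriv

lemma integral_expMeasure_eq_setIntegral {lam : ℝ} (hlam : 0 < lam) (g : ℝ → ℝ) :
    ∫ x, g x ∂expMeasure lam = ∫ x in Ioi 0, lam * exp (-(lam * x)) * g x := by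
  have hmeas : Measurable (gammaPDF 1 lam) := (measurable_gammaPDFReal 1 lam).ennreal_ofReal
  rw [expMeasure, gammaMeasure, integral_withDensity_eq_integral_toReal_smul hmeas
      (ae_of_all _ fun _ => ENNReal.ofReal_lt_top),
    ← integral_Ici_eq_integral_Ioi, ← integral_indicator measurableSet_Ici]
  congr 1 with x
  by_cases hx : 0 ≤ x
  · simp [gammaPDF, gammaPDFReal, hx, hlam.le, (exp_pos _).le]
  · simp [gammaPDF, gammaPDFReal, hx]

lemma ae_pos_expMeasure (r : ℝ) : ∀ᵐ x ∂expMeasure r, 0 < x := by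
  have hmeas : Measurable (gammaPDF 1 r) := (measurable_gammaPDFReal 1 r).ennreal_ofReal
  rw [expMeasure, gammaMeasure, ae_withDensity_iff hmeas]
  filter_upwards [Measure.ae_ne volume 0] with x hx0 hpdf
  exact lt_of_le_of_ne (not_lt.1 fun h => hpdf (gammaPDF_of_neg h)) (Ne.symm hx0)

lemma log_one_add_sinr_eq_sub {p x aF aN σ2 : ℝ} (hsum : aN + aF = 1) (hp : 0 ≤ p) (hx : 0 ≤ x)
    (haN : 0 ≤ aN) (hσ : 0 < σ2) :
    log (1 + p * x * aF / (σ2 + p * x * aN)) =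
      log (1 + p / σ2 * x) - log (1 + p * aN / σ2 * x) := by
  have h1 : 0 < 1 + p / σ2 * x := by positivity
  have h2 : 0 < 1 + p * aN / σ2 * x := by positivity
  rw [← log_div h1.ne' h2.ne']
  congr 1
  field_simp
  linear_combination p * x * hsum

lemma mul_div_add_mul_mem_Icc {t a b s : ℝ} (ht : 0 ≤ t) (ha : 0 ≤ a) (hb : 0 < b) (hs : 0 < s) :
    t * a / (s + t * b) ∈ Icc 0 (a / b) := by
  refine ⟨by positivity, ?_⟩
  rw [div_le_div_iff₀ (by positivity) hb]
  nlinarith [mul_nonneg ha hs.le]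

lemma tendsto_mul_div_add_mul_atTop {a b s : ℝ} (hb : b ≠ 0) :
    Tendsto (fun t => t * a / (s + t * b)) atTop (𝓝 (a / b)) := by
  have : Tendsto (fun t => a / (s / t + b)) atTop (𝓝 (a / (0 + b))) :=
    tendsto_const_nhds.div ((tendsto_const_nhds.div_atTop tendsto_id).add_const b) (by simpa)
  rw [zero_add] at this
  refine this.congr' ?_
  filter_upwards [eventually_gt_atTop 0] with t ht
  field_simp

lemma tendsto_integral_logb_one_add_sinr {μ : Measure ℝ} [IsProbabilityMeasure μ]
    (hμ : ∀ᵐ x ∂μ, 0 < x) {aF aN σ2 : ℝ} (haF : 0 ≤ aF) (haN : 0 < aN) (hσ : 0 < σ2) :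
    Tendsto (fun p => ∫ x, logb 2 (1 + p * x * aF / (σ2 + p * x * aN)) ∂μ) atTop
      (𝓝 (logb 2 (1 + aF / aN))) := by
  have hconst : ∫ _, logb 2 (1 + aF / aN) ∂μ = logb 2 (1 + aF / aN) := by simp
  rw [← hconst]
  refine tendsto_integral_filter_of_dominated_convergence (fun _ => logb 2 (1 + aF / aN))
    (Eventually.of_forall fun p =>
      ((measurable_log.comp (by fun_prop)).div_const (log 2)).aestronglyMeasurable) ?_
    (integrable_const _) ?_
  · filter_upwards [eventually_ge_atTop 0] with p hp
    filter_upwards [hμ] with x hx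
    obtain ⟨h0, h1⟩ := mul_div_add_mul_mem_Icc (mul_nonneg hp hx.le) haF haN hσ
    rw [norm_of_nonneg (logb_nonneg one_lt_two (by linarith))]
    exact logb_le_logb_of_le one_lt_two (by linarith) (by linarith)
  · filter_upwards [hμ] with x hx
    have hsinr := (tendsto_mul_div_add_mul_atTop (s := σ2) (a := aF) haN.ne').comp
      (tendsto_id.atTop_mul_const hx)
    exact (hsinr.const_add 1).logb (by positivity)

theorem far_user_ergodic_rate (lam aF aN σ2 : ℝ) (hlam : 0 < lam)
    (haF : 0 < aF) (haN : 0 < aN) (hsum : aN + aF = 1) (hσ : 0 < σ2) :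
    (∀ p : ℝ, 0 < p →
      ∫ x, Real.logb 2 (1 + p * x * aF / (σ2 + p * x * aN)) ∂(expMeasure lam) =
        (1 / Real.log 2) *
          (Real.exp (lam * σ2 / (aN * p)) * Ei (-(lam * σ2 / (aN * p))) -
            Real.exp (lam * σ2 / p) * Ei (-(lam * σ2 / p)))) ∧
    Filter.Tendsto
      (fun p : ℝ => ∫ x, Real.logb 2 (1 + p * x * aF / (σ2 + p * x * aN)) ∂(expMeasure lam))
      Filter.atTop (nhds (-Real.logb 2 aN)) := by
  have := isProbabilityMeasure_expMeasure hlam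
  refine ⟨fun p hp => ?_, ?_⟩
  · have hsplit : EqOn
        (fun x => lam * exp (-(lam * x)) * logb 2 (1 + p * x * aF / (σ2 + p * x * aN)))
        (fun x => (lam * exp (-(lam * x)) * log (1 + p / σ2 * x) -
          lam * exp (-(lam * x)) * log (1 + p * aN / σ2 * x)) / log 2) (Ioi 0) := fun x hx => by
      simp only [logb, log_one_add_sinr_eq_sub hsum hp.le (le_of_lt hx) haN.le hσ]
      ring
    have hc₁ : 0 < p / σ2 := by positivity
    have hc₂ : 0 < p * aN / σ2 := by positivity
    rw [integral_expMeasure_eq_setIntegral hlam, setIntegral_congr_fun measurableSet_Ioi hsplit,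
      integral_div, integral_sub (integrableOn_exp_mul_log_one_add hlam hc₁)
        (integrableOn_exp_mul_log_one_add hlam hc₂),
      integral_Ioi_exp_mul_log_one_add hlam hc₁, integral_Ioi_exp_mul_log_one_add hlam hc₂,
      show lam / (p / σ2) = lam * σ2 / p by field_simp,
      show lam / (p * aN / σ2) = lam * σ2 / (aN * p) by field_simp]
    ring
  · have hlim : logb 2 (1 + aF / aN) = -logb 2 aN := by
      rw [← logb_inv]
      congr 1
      field_simp
      linarith
    rw [← hlim]
    exact tendsto_integral_logb_one_add_sinr (ae_pos_expMeasure lam) haF.le haN hσ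
end
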